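/- Let P be a full-support probability on 𝕊, let V : 𝕊 → ℝ be monotone with V(s) > 0 for all s ∈ 𝕊, and let ν : 𝕊 → ℝ satisfy ν(s) > 0 for all s ∈ 𝕊. If ν(s) = ν_P^{μ_ν}(s) for every s ∈ 𝕊, where μ_ν is the fixed-point attribution of ν, then ν(s) = V(s) − V(s^-) for every s ∈ 𝕊. -/

import Mathlib

open Finset

namespace CoreAttr

variable (A : Type) [Fintype A] [DecidableEq A]

def listsLe : ℕ → Finset (List A)
  | 0 => {[]}
  | n + 1 => {[]} ∪ (Finset.univ ×ˢ listsLe n).image fun p : A × List A => p.1 :: p.2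

theorem mem_listsLe (n : ℕ) (l : List A) : l ∈ listsLe A n ↔ l.length ≤ n := by
  induction n generalizing l with
  | zero => simp [listsLe, Nat.le_zero, List.length_eq_zero_iff]
  | succ n ih =>
    cases l with
    | nil => simp [listsLe]
    | cons a t => simp [listsLe, ih, Nat.succ_le_succ_iff]

/-- The set of scenarios: nonempty lists of actions of length at most `L`. -/
def scenarios (L : ℕ) : Finset (List A) := (listsLe A L).filter fun s => s ≠ []

theorem mem_scenarios (L : ℕ) (l : List A) :
    l ∈ scenarios A L ↔ l ≠ [] ∧ l.length ≤ L := by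
  simp [scenarios, mem_listsLe, and_comm]

variable {A}

/-- `P` is a probability on the finite set `𝕊`. -/
def IsProb (𝕊 : Finset (List A)) (P : List A → ℝ) : Prop :=
  (∀ s ∈ 𝕊, 0 ≤ P s) ∧ ∑ s ∈ 𝕊, P s = 1

def FullSupport (𝕊 : Finset (List A)) (P : List A → ℝ) : Prop :=
  ∀ s ∈ 𝕊, 0 < P s

/-- `μ` is an internal attribution for the reward `V`. -/
def IsInternalAttr (𝕊 : Finset (List A)) (V : List A → ℝ) (μ : ℕ → List A → ℝ) : Prop :=
  (∀ i : ℕ, ∀ s ∈ 𝕊, 0 ≤ μ i s) ∧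
  (∀ i : ℕ, ∀ s ∈ 𝕊, ¬(1 ≤ i ∧ i ≤ s.length) → μ i s = 0) ∧
  (∀ s ∈ 𝕊, ∑ i ∈ Finset.Icc 1 s.length, μ i s = V s)

/-- The valuation associated with attribution `μ` under probability `P`:
`ν_P^μ(s) = E_{S∼P}[μ(ℓ(s), S) | S ≽ s]`. -/
noncomputable def assocVal (𝕊 : Finset (List A)) (P : List A → ℝ) (μ : ℕ → List A → ℝ)
    (s : List A) : ℝ :=
  (∑ s' ∈ 𝕊.filter (fun s' => s <+: s'), P s' * μ s.length s') /
    (∑ s' ∈ 𝕊.filter (fun s' => s <+: s'), P s')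

/-- `Σ_{j=1}^{ℓ(s)} ν(s^j)`. -/
noncomputable def sumPrefix (ν : List A → ℝ) (s : List A) : ℝ :=
  ∑ j ∈ Finset.Icc 1 s.length, ν (s.take j)

/-- The fixed-point attribution `μ_ν`. -/
noncomputable def muFP (V ν : List A → ℝ) (i : ℕ) (s : List A) : ℝ :=
  if 1 ≤ i ∧ i ≤ s.length then ν (s.take i) * V s / sumPrefix ν s else 0

/-- The MM objective `f`. -/
noncomputable def fObj (𝕊 : Finset (List A)) (P V ν : List A → ℝ) : ℝ :=
  ∑ s ∈ 𝕊, P s * (V s * Real.log (sumPrefix ν s) - sumPrefix ν s)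

/-- The MM surrogate `g(ν | ν̂)`. -/
noncomputable def gSurr (𝕊 : Finset (List A)) (P V ν νh : List A → ℝ) : ℝ :=
  ∑ s ∈ 𝕊, P s * ∑ j ∈ Finset.Icc 1 s.length,
    (νh (s.take j) * V s / sumPrefix νh s *
        Real.log (ν (s.take j) / νh (s.take j) * sumPrefix νh s) -
      ν (s.take j))


section AuxLemmas
variable {A : Type} [Fintype A] [DecidableEq A]

lemma take_mem_scenarios {L : ℕ} {s : List A} (hs : s ∈ scenarios A L)
    {j : ℕ} (hj1 : 1 ≤ j) : s.take j ∈ scenarios A L := by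
  rw [mem_scenarios] at hs ⊢
  have hlen : (s.take j).length = min j s.length := List.length_take
  have hslen : 1 ≤ s.length := List.length_pos_iff.mpr hs.1
  constructor
  · intro h
    rcases List.take_eq_nil_iff.mp h with h' | h'
    · omega
    · exact hs.1 h'
  · rw [List.length_take]
    omega

lemma sumPrefix_pos {L : ℕ} {s : List A} (hs : s ∈ scenarios A L)
    {ν : List A → ℝ} (hν : ∀ t ∈ scenarios A L, 0 < ν t) : 0 < sumPrefix ν s := by
  have hslen : 1 ≤ s.length := List.length_pos_iff.mpr ((mem_scenarios A L s).mp hs).1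
  apply Finset.sum_pos
  · intro j hj
    rw [Finset.mem_Icc] at hj
    exact hν _ (take_mem_scenarios hs hj.1)
  · exact ⟨1, Finset.mem_Icc.mpr ⟨le_refl 1, hslen⟩⟩

lemma sumPrefix_eq_dropLast_add {s : List A} (hne : s ≠ []) (ν : List A → ℝ) :
    sumPrefix ν s = sumPrefix ν s.dropLast + ν s := by
  have hslen : 1 ≤ s.length := List.length_pos_iff.mpr hne
  obtain ⟨n, hn⟩ : ∃ n, s.length = n + 1 := ⟨s.length - 1, by omega⟩
  unfold sumPrefix
  rw [List.length_dropLast, hn]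
  rw [Finset.sum_Icc_succ_top (by omega : 1 ≤ n + 1)]
  congr 1
  · apply Finset.sum_congr (by norm_num)
    intro j hj
    rw [Finset.mem_Icc] at hj
    rw [List.dropLast_eq_take, List.take_take]
    congr 1
    simp
    omega
  · rw [List.take_of_length_le (by omega)]
end AuxLemmas

/-- **Fixed point implies additivity.**  If a positive valuation `ν` satisfies
`ν(s) = ν_P^{μ_ν}(s)` for every scenario `s`, then `ν` is additive for `V`. -/
theorem fixed_point_implies_additive
    {A : Type} [Fintype A] [DecidableEq A] [Nonempty A] (L : ℕ) (hL : 1 ≤ L)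
    (P : List A → ℝ) (hP : IsProb (scenarios A L) P)
    (hPfull : FullSupport (scenarios A L) P)
    (V : List A → ℝ) (hV0 : V [] = 0)
    (hmono : ∀ s ∈ scenarios A L, ∀ s' ∈ scenarios A L, s <+: s' → V s ≤ V s')
    (hVpos : ∀ s ∈ scenarios A L, 0 < V s)
    (ν : List A → ℝ) (hνpos : ∀ s ∈ scenarios A L, 0 < ν s)
    (hfix : ∀ s ∈ scenarios A L, ν s = assocVal (scenarios A L) P (muFP V ν) s) :
    ∀ s ∈ scenarios A L, ν s = V s - V s.dropLast := by
  intro s hs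
  set 𝕊 := scenarios A L with h𝕊
  have hWpos : ∀ t ∈ 𝕊, 0 < sumPrefix ν t := fun t ht => sumPrefix_pos ht hνpos
  have key : ∀ t ∈ 𝕊, ∑ s' ∈ 𝕊.filter (fun s' => t <+: s'), P s' * (V s' / sumPrefix ν s' - 1) = 0 := by
    intro t ht
    have htne : t ≠ [] := ((mem_scenarios A L t).mp ht).1
    have htlen : 1 ≤ t.length := List.length_pos_iff.mpr htne
    have hDpos : 0 < ∑ s' ∈ 𝕊.filter (fun s' => t <+: s'), P s' := by
      apply Finset.sum_pos'
      · intro s' hs'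
        rw [Finset.mem_filter] at hs'
        exact (hPfull s' hs'.1).le
      · exact ⟨t, Finset.mem_filter.mpr ⟨ht, List.prefix_refl t⟩, hPfull t ht⟩
    have hnum : ∑ s' ∈ 𝕊.filter (fun s' => t <+: s'), P s' * muFP V ν t.length s'
        = ν t * ∑ s' ∈ 𝕊.filter (fun s' => t <+: s'), P s' * (V s' / sumPrefix ν s') := by
      rw [Finset.mul_sum]
      apply Finset.sum_congr rfl
      intro s' hs'
      rw [Finset.mem_filter] at hs'
      have hpre : t <+: s' := hs'.2
      have htake : s'.take t.length = t := (List.prefix_iff_eq_take.mp hpre).symm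
      have hlen : t.length ≤ s'.length := hpre.length_le
      rw [muFP, if_pos ⟨htlen, hlen⟩, htake]
      ring
    have hfixt := hfix t ht
    rw [assocVal, hnum] at hfixt
    have h1 : ν t * (∑ s' ∈ 𝕊.filter (fun s' => t <+: s'), P s')
        = ν t * ∑ s' ∈ 𝕊.filter (fun s' => t <+: s'), P s' * (V s' / sumPrefix ν s') := by
      rw [eq_div_iff (ne_of_gt hDpos)] at hfixt
      linarith [hfixt]
    have h2 : (∑ s' ∈ 𝕊.filter (fun s' => t <+: s'), P s')
        = ∑ s' ∈ 𝕊.filter (fun s' => t <+: s'), P s' * (V s' / sumPrefix ν s') :=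
      mul_left_cancel₀ (ne_of_gt (hνpos t ht)) h1
    calc ∑ s' ∈ 𝕊.filter (fun s' => t <+: s'), P s' * (V s' / sumPrefix ν s' - 1)
        = (∑ s' ∈ 𝕊.filter (fun s' => t <+: s'), P s' * (V s' / sumPrefix ν s'))
          - ∑ s' ∈ 𝕊.filter (fun s' => t <+: s'), P s' := by
          rw [← Finset.sum_sub_distrib]; apply Finset.sum_congr rfl; intros; ring
      _ = 0 := by rw [← h2]; ring
  have hVW : ∀ t ∈ 𝕊, V t = sumPrefix ν t := by
    intro t ht
    have htne : t ≠ [] := ((mem_scenarios A L t).mp ht).1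
    have hsplit : 𝕊.filter (fun s' => t <+: s')
        = insert t (Finset.univ.biUnion fun a : A => 𝕊.filter (fun s' => (t ++ [a]) <+: s')) := by
      ext s'
      simp only [Finset.mem_filter, Finset.mem_insert, Finset.mem_biUnion, Finset.mem_univ,
        true_and]
      constructor
      · rintro ⟨hs', hpre⟩
        by_cases heq : s' = t
        · exact Or.inl heq
        · obtain ⟨u, hu⟩ := hpre
          cases u with
          | nil => exact absurd (by simp [← hu]) heq
          | cons a u' => exact Or.inr ⟨a, hs', u', by simp [← hu]⟩
      · rintro (rfl | ⟨a, hs', hpre⟩)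
        · exact ⟨ht, List.prefix_refl _⟩
        · exact ⟨hs', ((List.prefix_append t [a]).trans hpre)⟩
    have hnotmem : t ∉ Finset.univ.biUnion fun a : A => 𝕊.filter (fun s' => (t ++ [a]) <+: s') := by
      simp only [Finset.mem_biUnion, Finset.mem_univ, Finset.mem_filter, true_and, not_exists]
      rintro a ⟨-, hpre⟩
      have := hpre.length_le
      simp at this
    have hinner : ∀ a : A,
        ∑ s' ∈ 𝕊.filter (fun s' => (t ++ [a]) <+: s'), P s' * (V s' / sumPrefix ν s' - 1) = 0 := by
      intro a
      by_cases hlen : (t ++ [a]).length ≤ L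
      · exact key (t ++ [a]) ((mem_scenarios A L _).mpr ⟨by simp, hlen⟩)
      · have hemp : 𝕊.filter (fun s' => (t ++ [a]) <+: s') = ∅ := by
          apply Finset.filter_eq_empty_iff.mpr
          intro s' hs' hpre
          have h1 := hpre.length_le
          have h2 := ((mem_scenarios A L s').mp hs').2
          omega
        rw [hemp, Finset.sum_empty]
    have hdisj : ∀ a ∈ (Finset.univ : Finset A), ∀ b ∈ (Finset.univ : Finset A), a ≠ b →
        Disjoint (𝕊.filter (fun s' => (t ++ [a]) <+: s'))
          (𝕊.filter (fun s' => (t ++ [b]) <+: s')) := by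
      intro a _ b _ hab
      rw [Finset.disjoint_left]
      intro s' hsa hsb
      rw [Finset.mem_filter] at hsa hsb
      apply hab
      have hor := List.prefix_or_prefix_of_prefix hsa.2 hsb.2
      have heq : t ++ [a] = t ++ [b] := by
        rcases hor with hp | hp
        · exact hp.eq_of_length (by simp)
        · exact (hp.eq_of_length (by simp)).symm
      simpa using heq
    have hkey := key t ht
    rw [hsplit, Finset.sum_insert hnotmem, Finset.sum_biUnion hdisj] at hkey
    rw [Finset.sum_congr rfl (fun a _ => hinner a), Finset.sum_const_zero, add_zero] at hkey
    have hPt := hPfull t ht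
    have hfrac : V t / sumPrefix ν t - 1 = 0 := by
      rcases mul_eq_zero.mp hkey with h1 | h1
      · exact absurd h1 (ne_of_gt hPt)
      · exact h1
    have hW := hWpos t ht
    have hdiv : V t / sumPrefix ν t = 1 := by linarith
    field_simp at hdiv
    linarith
  have hsum := sumPrefix_eq_dropLast_add ((mem_scenarios A L s).mp hs).1 ν
  have hVs : V s = sumPrefix ν s := hVW s hs
  have hVd : V s.dropLast = sumPrefix ν s.dropLast := by
    by_cases hd : s.dropLast = []
    · rw [hd, hV0]
      unfold sumPrefix
      simp
    · apply hVW
      rw [h𝕊, mem_scenarios]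
      refine ⟨hd, ?_⟩
      have := ((mem_scenarios A L s).mp hs).2
      rw [List.length_dropLast]
      omega
  rw [hVs, hVd, hsum]
  ring


end CoreAttr
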